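/- (FreRA is semantic preserving in the frequency domain) Let (Ω, μ) be a probability space, F a positive integer, X : Ω → (Fin F → ℂ) a measurable random frequency-component vector taking finitely many values, and Y a measurable random variable on Ω taking finitely many values in a measurable space with measurable singletons. Let S ⊆ Fin F be a set of critical components, let U = (ω ↦ X ω restricted to S) and V = (ω ↦ X ω restricted to the complement of S), and suppose V is independent of the pair ⟨U, Y⟩. Then for any fixed weight vector w : Fin F → ℂ with w i = 1 for all i ∈ S, the weighted view preserves the mutual information with the label: I((ω ↦ fun i => w i * X ω i) : Y) = I(X : Y), and both equal I(U : Y). -/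

import Mathlib

open MeasureTheory Complex

/-- The Shannon entropy of a (finitely-valued) random variable `X` on a probability space,
`H(X) = −∑_s P(X = s) · log P(X = s)` (as in Mathlib's `ProbabilityTheory.entropy`). -/
noncomputable def entropy {Ω S : Type*} [MeasurableSpace Ω] (μ : Measure Ω) (X : Ω → S) : ℝ :=
  ∑' s : S, Real.negMulLog (μ (X ⁻¹' {s})).toReal

/-- The conditional entropy `H(X | Y) = H(⟨X, Y⟩) − H(Y)` of finitely-valued random variables. -/
noncomputable def condEntropy {Ω S T : Type*} [MeasurableSpace Ω] (μ : Measure Ω)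
    (X : Ω → S) (Y : Ω → T) : ℝ :=
  entropy μ (fun ω => (X ω, Y ω)) - entropy μ Y

/-- The mutual information `I(X : Y) = H(X) − H(X | Y)` of finitely-valued random variables. -/
noncomputable def mutualInfo {Ω S T : Type*} [MeasurableSpace Ω] (μ : Measure Ω)
    (X : Ω → S) (Y : Ω → T) : ℝ :=
  entropy μ X - condEntropy μ X Y

section helpers
open ProbabilityTheory

variable {Ω : Type*} [MeasurableSpace Ω] {μ : Measure Ω}

lemma entropy_comp_inj {α β : Type*} (X : Ω → α) (f : α → β) (hf : Function.Injective f) :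
    entropy μ (fun ω => f (X ω)) = entropy μ X := by
  unfold entropy
  have hsupp : Function.support
      (fun b => Real.negMulLog (μ ((fun ω => f (X ω)) ⁻¹' {b})).toReal) ⊆ Set.range f := by
    intro b hb
    by_contra hbr
    apply hb
    have he : (fun ω => f (X ω)) ⁻¹' {b} = ∅ := by
      ext ω
      simp only [Set.mem_preimage, Set.mem_singleton_iff, Set.mem_empty_iff_false, iff_false]
      exact fun h => hbr ⟨X ω, h⟩
    simp [he]
  rw [← hf.tsum_eq hsupp]
  apply tsum_congr
  intro a
  have : (fun ω => f (X ω)) ⁻¹' {f a} = X ⁻¹' {a} := by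
    ext ω; simp [hf.eq_iff]
  rw [this]

lemma entropy_eq_sum {α : Type*} (X : Ω → α) (hfin : (Set.range X).Finite) :
    entropy μ X = ∑ a ∈ hfin.toFinset, Real.negMulLog (μ (X ⁻¹' {a})).toReal := by
  apply tsum_eq_sum
  intro a ha
  have he : X ⁻¹' {a} = ∅ := by
    ext ω
    simp only [Set.mem_preimage, Set.mem_singleton_iff, Set.mem_empty_iff_false, iff_false]
    intro h
    exact ha (by simpa [h] using hfin.mem_toFinset.2 ⟨ω, h⟩)
  simp [he]

lemma sum_prob_eq_one {α : Type*} [MeasurableSpace α] [MeasurableSingletonClass α]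
    [IsProbabilityMeasure μ] (X : Ω → α) (hX : Measurable X) (hfin : (Set.range X).Finite) :
    ∑ a ∈ hfin.toFinset, (μ (X ⁻¹' {a})).toReal = 1 := by
  rw [← ENNReal.toReal_sum (fun a _ => measure_ne_top μ _)]
  have h1 : ∑ a ∈ hfin.toFinset, μ (X ⁻¹' {a}) = μ (⋃ a ∈ hfin.toFinset, X ⁻¹' {a}) := by
    rw [measure_biUnion_finset]
    · intro a _ b _ hab
      exact Set.disjoint_left.2 fun ω h1 h2 => hab (by
        simp only [Set.mem_preimage, Set.mem_singleton_iff] at h1 h2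
        rw [← h1, ← h2])
    · exact fun a _ => hX (measurableSet_singleton a)
  rw [h1]
  have h2 : (⋃ a ∈ hfin.toFinset, X ⁻¹' {a}) = Set.univ := by
    ext ω
    simp only [Set.mem_iUnion, Set.mem_preimage, Set.mem_singleton_iff, Set.mem_univ, iff_true]
    exact ⟨X ω, hfin.mem_toFinset.2 ⟨ω, rfl⟩, rfl⟩
  rw [h2, measure_univ, ENNReal.toReal_one]

lemma entropy_pair_of_indep {α β : Type*} [MeasurableSpace α] [MeasurableSingletonClass α]
    [MeasurableSpace β] [MeasurableSingletonClass β] [IsProbabilityMeasure μ]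
    (A : Ω → α) (B : Ω → β) (hA : Measurable A) (hB : Measurable B)
    (hAfin : (Set.range A).Finite) (hBfin : (Set.range B).Finite)
    (hindep : IndepFun A B μ) :
    entropy μ (fun ω => (A ω, B ω)) = entropy μ A + entropy μ B := by
  classical
  set p : α → ℝ := fun a => (μ (A ⁻¹' {a})).toReal with hp
  set q : β → ℝ := fun b => (μ (B ⁻¹' {b})).toReal with hq
  have key : ∀ a b, (μ ((fun ω => (A ω, B ω)) ⁻¹' {(a, b)})).toReal = p a * q b := by
    intro a b
    have h : (fun ω => (A ω, B ω)) ⁻¹' {(a, b)} = A ⁻¹' {a} ∩ B ⁻¹' {b} := by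
      ext ω; simp [Prod.ext_iff]
    rw [h, hindep.measure_inter_preimage_eq_mul _ _ (measurableSet_singleton a)
      (measurableSet_singleton b), ENNReal.toReal_mul]
  have hsum : entropy μ (fun ω => (A ω, B ω)) =
      ∑ c ∈ hAfin.toFinset ×ˢ hBfin.toFinset,
        Real.negMulLog (μ ((fun ω => (A ω, B ω)) ⁻¹' {c})).toReal := by
    apply tsum_eq_sum
    rintro ⟨a, b⟩ hab
    have he : (fun ω => (A ω, B ω)) ⁻¹' {(a, b)} = ∅ := by
      ext ω
      simp only [Set.mem_preimage, Set.mem_singleton_iff, Set.mem_empty_iff_false, iff_false]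
      intro h
      apply hab
      rw [Finset.mem_product]
      exact ⟨hAfin.mem_toFinset.2 ⟨ω, congrArg Prod.fst h⟩,
             hBfin.mem_toFinset.2 ⟨ω, congrArg Prod.snd h⟩⟩
    simp [he]
  rw [hsum, Finset.sum_product]
  have hterm : ∀ a ∈ hAfin.toFinset, ∀ b ∈ hBfin.toFinset,
      Real.negMulLog (μ ((fun ω => (A ω, B ω)) ⁻¹' {(a, b)})).toReal
        = q b * Real.negMulLog (p a) + p a * Real.negMulLog (q b) := by
    intro a _ b _
    rw [key a b, Real.negMulLog_mul]
  calc ∑ a ∈ hAfin.toFinset, ∑ b ∈ hBfin.toFinset,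
        Real.negMulLog (μ ((fun ω => (A ω, B ω)) ⁻¹' {(a, b)})).toReal
      = ∑ a ∈ hAfin.toFinset, ∑ b ∈ hBfin.toFinset,
        (q b * Real.negMulLog (p a) + p a * Real.negMulLog (q b)) :=
        Finset.sum_congr rfl fun a ha => Finset.sum_congr rfl fun b hb => hterm a ha b hb
    _ = (∑ b ∈ hBfin.toFinset, q b) * (∑ a ∈ hAfin.toFinset, Real.negMulLog (p a))
        + (∑ a ∈ hAfin.toFinset, p a) * (∑ b ∈ hBfin.toFinset, Real.negMulLog (q b)) := by
        simp only [Finset.sum_add_distrib, ← Finset.sum_mul, ← Finset.mul_sum]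
    _ = entropy μ A + entropy μ B := by
        rw [sum_prob_eq_one A hA hAfin, sum_prob_eq_one B hB hBfin,
          entropy_eq_sum A hAfin, entropy_eq_sum B hBfin]
        ring

lemma mutualInfo_comp_inj {α β γ : Type*} (X : Ω → α) (Y : Ω → γ) (f : α → β)
    (hf : Function.Injective f) :
    mutualInfo μ (fun ω => f (X ω)) Y = mutualInfo μ X Y := by
  unfold mutualInfo condEntropy
  have h1 : entropy μ (fun ω => f (X ω)) = entropy μ X := entropy_comp_inj X f hf
  have h2 : entropy μ (fun ω => (f (X ω), Y ω)) = entropy μ (fun ω => (X ω, Y ω)) := by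
    have hinj : Function.Injective (fun c : α × γ => (f c.1, c.2)) := by
      intro c c' h
      simp only [Prod.ext_iff] at h ⊢
      exact ⟨hf h.1, h.2⟩
    exact entropy_comp_inj (μ := μ) (fun ω => (X ω, Y ω)) _ hinj
  rw [h1, h2]

lemma mutualInfo_pair_of_indep {α β γ : Type*} [MeasurableSpace α] [MeasurableSingletonClass α]
    [MeasurableSpace β] [MeasurableSingletonClass β]
    [MeasurableSpace γ] [MeasurableSingletonClass γ] [IsProbabilityMeasure μ]
    (A : Ω → α) (B : Ω → β) (Y : Ω → γ)
    (hA : Measurable A) (hB : Measurable B) (hY : Measurable Y)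
    (hAfin : (Set.range A).Finite) (hBfin : (Set.range B).Finite) (hYfin : (Set.range Y).Finite)
    (hindep : IndepFun B (fun ω => (A ω, Y ω)) μ) :
    mutualInfo μ (fun ω => (A ω, B ω)) Y = mutualInfo μ A Y := by
  have hAY : Measurable (fun ω => (A ω, Y ω)) := hA.prodMk hY
  have hAYfin : (Set.range fun ω => (A ω, Y ω)).Finite :=
    (hAfin.prod hYfin).subset (by rintro _ ⟨ω, rfl⟩; exact ⟨⟨ω, rfl⟩, ⟨ω, rfl⟩⟩)
  have hBA : IndepFun B A μ := hindep.comp measurable_id measurable_fst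
  have h1 : entropy μ (fun ω => (A ω, B ω)) = entropy μ B + entropy μ A := by
    have hswap : entropy μ (fun ω => (A ω, B ω)) = entropy μ (fun ω => (B ω, A ω)) :=
      entropy_comp_inj (μ := μ) (fun ω => (B ω, A ω)) Prod.swap Prod.swap_injective
    rw [hswap]
    exact entropy_pair_of_indep B A hB hA hBfin hAfin hBA
  have h2 : entropy μ (fun ω => ((A ω, B ω), Y ω))
      = entropy μ B + entropy μ (fun ω => (A ω, Y ω)) := by
    have hinj : Function.Injective (fun c : β × α × γ => ((c.2.1, c.1), c.2.2)) := by
      intro c c' h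
      simp only [Prod.ext_iff] at h ⊢
      exact ⟨h.1.2, h.1.1, h.2⟩
    have he : entropy μ (fun ω => ((A ω, B ω), Y ω))
        = entropy μ (fun ω => (B ω, (A ω, Y ω))) :=
      entropy_comp_inj (μ := μ) (fun ω => (B ω, (A ω, Y ω))) _ hinj
    rw [he]
    exact entropy_pair_of_indep B (fun ω => (A ω, Y ω)) hB hAY hBfin hAYfin hindep
  simp only [mutualInfo, condEntropy]
  rw [h1, h2]
  ring

end helpers

open ProbabilityTheory in
/-- (FreRA is semantic preserving in the frequency domain.)
Let `X` be a measurable, finitely-valued random frequency-component vector and `Y` a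
finitely-valued label.  Let `S` be the set of critical components, `U` the restriction of `X`
to `S` and `V` its restriction to the complement of `S`, and suppose `V` is independent of the
pair `⟨U, Y⟩`.  Then for any fixed weight vector `w` with `w i = 1` for all `i ∈ S`, the
weighted view preserves the mutual information with the label:
`I((ω ↦ fun i => w i * X ω i) : Y) = I(X : Y)`, and both equal `I(U : Y)`. -/
theorem mutualInfo_freRA_weighted_view {Ω G : Type*} [MeasurableSpace Ω]
    [MeasurableSpace G] [MeasurableSingletonClass G]
    (μ : Measure Ω) [IsProbabilityMeasure μ]
    (F : ℕ) (hF : 0 < F) (X : Ω → (Fin F → ℂ))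
    (hX : Measurable X) (hXfin : (Set.range X).Finite)
    (Y : Ω → G) (hY : Measurable Y) (hYfin : (Set.range Y).Finite)
    (S : Set (Fin F)) (w : Fin F → ℂ) (hw : ∀ i ∈ S, w i = 1)
    (hindep : IndepFun (fun ω => (fun i : ↥Sᶜ => X ω i.1))
      (fun ω => ((fun i : ↥S => X ω i.1), Y ω)) μ) :
    mutualInfo μ (fun ω => fun i => w i * X ω i) Y = mutualInfo μ X Y ∧
      mutualInfo μ X Y = mutualInfo μ (fun ω => (fun i : ↥S => X ω i.1)) Y := by
  classical
  set U : Ω → (↥S → ℂ) := fun ω => fun i : ↥S => X ω i.1 with hUdef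
  set V : Ω → (↥Sᶜ → ℂ) := fun ω => fun i : ↥Sᶜ => X ω i.1 with hVdef
  have hU : Measurable U := measurable_pi_lambda _ fun i => (measurable_pi_apply i.1).comp hX
  have hV : Measurable V := measurable_pi_lambda _ fun i => (measurable_pi_apply i.1).comp hX
  have hUfin : (Set.range U).Finite :=
    (hXfin.image (fun x => fun i : ↥S => x i.1)).subset
      (by rintro _ ⟨ω, rfl⟩; exact ⟨X ω, ⟨ω, rfl⟩, rfl⟩)
  have hVfin : (Set.range V).Finite :=
    (hXfin.image (fun x => fun i : ↥Sᶜ => x i.1)).subset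
      (by rintro _ ⟨ω, rfl⟩; exact ⟨X ω, ⟨ω, rfl⟩, rfl⟩)
  set e : (Fin F → ℂ) → ((↥S → ℂ) × (↥Sᶜ → ℂ)) :=
    fun x => (fun i => x i.1, fun i => x i.1) with hedef
  have he : Function.Injective e := by
    intro x x' h
    funext i
    by_cases hi : i ∈ S
    · exact congrFun (congrArg Prod.fst h) ⟨i, hi⟩
    · exact congrFun (congrArg Prod.snd h) ⟨i, hi⟩
  have h2 : mutualInfo μ X Y = mutualInfo μ U Y := by
    rw [← mutualInfo_comp_inj (μ := μ) X Y e he]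
    exact mutualInfo_pair_of_indep U V Y hU hV hY hUfin hVfin hYfin hindep
  set φ : (↥Sᶜ → ℂ) → (↥Sᶜ → ℂ) := fun v => fun i => w i.1 * v i with hφdef
  have hφ : Measurable φ :=
    measurable_pi_lambda _ fun i => by
      simp only [hφdef]; exact (measurable_pi_apply i : Measurable fun v : ↥Sᶜ → ℂ => v i).const_mul (w i.1)
  have hindep' : IndepFun (fun ω => φ (V ω)) (fun ω => (U ω, Y ω)) μ :=
    hindep.comp hφ measurable_id
  have hVφfin : (Set.range fun ω => φ (V ω)).Finite :=
    (hVfin.image φ).subset (by rintro _ ⟨ω, rfl⟩; exact ⟨V ω, ⟨ω, rfl⟩, rfl⟩)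
  have h1 : mutualInfo μ (fun ω => fun i => w i * X ω i) Y = mutualInfo μ U Y := by
    rw [← mutualInfo_comp_inj (μ := μ) (fun ω => fun i => w i * X ω i) Y e he]
    have hrw : (fun ω => e ((fun ω => fun i => w i * X ω i) ω))
        = fun ω => (U ω, φ (V ω)) := by
      funext ω
      refine Prod.ext (funext fun i => ?_) rfl
      simp only [hedef, hUdef]
      rw [hw i.1 i.2, one_mul]
    rw [hrw]
    exact mutualInfo_pair_of_indep U (fun ω => φ (V ω)) Y hU (hφ.comp hV) hY hUfin
      hVφfin hYfin hindep'
  exact ⟨h1.trans h2.symm, h2⟩
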